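/- arXiv:2410.18688 — 8 statements merged into one kernel-verified Lean document; each statement's English description precedes it below -/
import Mathlib

section
/- If an imputation method exists that draws imputations from the correct conditional predictive distribution p(X0 | X1, O, R_{X1} = 1, R_{X0} = 0) for every partition of X into (X1, X0), then the full law p(O, X, R) is identifiable from the observed data law; conversely, identifiability of the full law implies such a conditionally complete imputation method exists. -/
/- Discrete missing data model: fully observed variables `O`, partially observed
variables `X` indexed by `ι` with values `V i`, response indicators `ι → Bool`.
A full law is a pmf `p : O × (∀ i, V i) × (ι → Bool) → ℝ`. -/

attribute [local instance] Classical.propDecidable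

/-- The observed data law `p(O, X*, R)` induced by a full law, where the proxy
`X*ᵢ` equals `some (Xᵢ)` if `Rᵢ = 1` and `none` (NA) otherwise. -/
noncomputable def obsLaw {O ι : Type} [Fintype ι] [DecidableEq ι]
    {V : ι → Type} [∀ i, Fintype (V i)]
    (p : O × (∀ i, V i) × (ι → Bool) → ℝ) :
    O × (∀ i, Option (V i)) × (ι → Bool) → ℝ :=
  fun w => ∑ x : ∀ i, V i,
    if (∀ i, w.2.1 i = if w.2.2 i then some (x i) else none)
    then p (w.1, x, w.2.2) else 0

/-- The conditional predictive distribution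
`p(X₀ | X₁ = x₁, O = o, R_{X₁} = 1, R_{X₀} = 0)` for the response pattern `r`
(with `X₁ = {i | r i = true}` observed and `X₀ = {i | r i = false}` missing),
evaluated at a full assignment `x`. -/
noncomputable def condPred {O ι : Type} [Fintype ι] [DecidableEq ι]
    {V : ι → Type} [∀ i, Fintype (V i)]
    (p : O × (∀ i, V i) × (ι → Bool) → ℝ) (r : ι → Bool) (o : O) (x : ∀ i, V i) : ℝ :=
  p (o, x, r) /
    ∑ x' : ∀ i, V i, if (∀ i, r i = true → x' i = x i) then p (o, x', r) else 0

/-- a conditionally complete imputation method (a functional `ξ` of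
the observed data law producing, for every partition of `X` into observed `X₁`
and missing `X₀`, draws from the correct conditional predictive distribution
`p(X₀ | X₁, O, R_{X₁} = 1, R_{X₀} = 0)`) exists if and only if the full law
`p(O, X, R)` is identifiable from the observed data law. -/
theorem stmt_1 {O ι : Type} [Fintype O] [Fintype ι] [DecidableEq ι]
    {V : ι → Type} [∀ i, Fintype (V i)]
    (M : Set (O × (∀ i, V i) × (ι → Bool) → ℝ))
    (hM : ∀ p ∈ M, (∀ v, 0 < p v) ∧ ∑ v, p v = 1) :
    (∃ ξ : (O × (∀ i, Option (V i)) × (ι → Bool) → ℝ) →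
        (ι → Bool) → O → (∀ i, V i) → ℝ,
      ∀ p ∈ M, ∀ r o x, condPred p r o x = ξ (obsLaw p) r o x)
    ↔ (∃ f : (O × (∀ i, Option (V i)) × (ι → Bool) → ℝ) →
        (O × (∀ i, V i) × (ι → Bool) → ℝ),
      ∀ p ∈ M, p = f (obsLaw p)) := by
  constructor
  · rintro ⟨ξ, hξ⟩
    refine ⟨fun q w => ξ q w.2.2 w.1 w.2.1 *
      q (w.1, fun i => if w.2.2 i then some (w.2.1 i) else none, w.2.2), ?_⟩
    intro p hp
    funext w
    obtain ⟨o, x, r⟩ := w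
    dsimp only
    rw [← hξ p hp r o x]
    have hD : obsLaw p (o, fun i => if r i then some (x i) else none, r)
        = ∑ x' : ∀ i, V i, if (∀ i, r i = true → x' i = x i) then p (o, x', r) else 0 := by
      unfold obsLaw
      apply Finset.sum_congr rfl
      intro x' _
      refine if_congr ?_ rfl rfl
      constructor
      · intro h i hi
        have := h i
        simp [hi] at this
        exact this.symm
      · intro h i
        by_cases hi : r i
        · simp [hi, h i hi]
        · simp [hi]
    have hpos : 0 < ∑ x' : ∀ i, V i,
        if (∀ i, r i = true → x' i = x i) then p (o, x', r) else 0 := by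
      have hp0 := (hM p hp).1
      refine Finset.sum_pos' (fun x' _ => ?_) ⟨x, Finset.mem_univ x, ?_⟩
      · split
        · exact (hp0 _).le
        · exact le_refl 0
      · simpa using hp0 (o, x, r)
    show p (o, x, r) = condPred p r o x * _
    rw [hD, condPred, div_mul_cancel₀ _ (ne_of_gt hpos)]
  · rintro ⟨f, hf⟩
    exact ⟨fun q r o x => condPred (f q) r o x,
      fun p hp r o x => by
        show condPred p r o x = condPred (f (obsLaw p)) r o x
        rw [← hf p hp]⟩
end

section
/- A conditionally complete imputation method for the target law p(O, X) exists if and only if the full law p(O, X, R) is identifiable from the observed data law. -/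
/- Discrete missing data model: fully observed variables `O`, partially observed
variables `X` indexed by `ι` with values `V i`, response indicators `ι → Bool`.
A full law is a pmf `p : O × (∀ i, V i) × (ι → Bool) → ℝ`. -/

attribute [local instance] Classical.propDecidable

/-- a conditionally complete imputation method for the target law
`p(O, X)` — i.e. a functional of the observed data law that, for every subset
`X₀` of `X` (every response pattern `r`, with `X₁ = X \ X₀` observed), draws
imputations from `p(X₀ | X₁, O, R_{X₁} = 1, R_{X₀} = 0)` — exists if and only
if the full law `p(O, X, R)` is identifiable from the observed data law. -/
theorem stmt_3 {O ι : Type} [Fintype O] [Fintype ι] [DecidableEq ι]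
    {V : ι → Type} [∀ i, Fintype (V i)]
    (M : Set (O × (∀ i, V i) × (ι → Bool) → ℝ))
    (hM : ∀ p ∈ M, (∀ v, 0 < p v) ∧ ∑ v, p v = 1) :
    (∃ ξ : (O × (∀ i, Option (V i)) × (ι → Bool) → ℝ) →
        (ι → Bool) → O → (∀ i, V i) → ℝ,
      ∀ p ∈ M, ∀ r o x, condPred p r o x = ξ (obsLaw p) r o x)
    ↔ (∃ f : (O × (∀ i, Option (V i)) × (ι → Bool) → ℝ) →
        (O × (∀ i, V i) × (ι → Bool) → ℝ),
      ∀ p ∈ M, p = f (obsLaw p)) := by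
  constructor
  · rintro ⟨ξ, hξ⟩
    refine ⟨fun q w => ξ q w.2.2 w.1 w.2.1 *
      q (w.1, fun i => if w.2.2 i then some (w.2.1 i) else none, w.2.2), ?_⟩
    intro p hp
    funext w
    obtain ⟨o, x, r⟩ := w
    obtain ⟨hpos, -⟩ := hM p hp
    dsimp only
    rw [← hξ p hp r o x]
    have hD : obsLaw p (o, fun i => if r i then some (x i) else none, r)
        = ∑ x' : ∀ i, V i, if (∀ i, r i = true → x' i = x i)
            then p (o, x', r) else 0 := by
      unfold obsLaw
      apply Finset.sum_congr rfl
      intro x' _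
      refine if_congr ?_ rfl rfl
      constructor
      · intro h i hi
        have := h i
        simp [hi] at this
        exact this.symm
      · intro h i
        by_cases hi : r i
        · simp [hi, h i hi]
        · simp [hi]
    have hDpos : 0 < ∑ x' : ∀ i, V i, if (∀ i, r i = true → x' i = x i)
        then p (o, x', r) else 0 := by
      have hle : p (o, x, r) ≤ ∑ x' : ∀ i, V i,
          if (∀ i, r i = true → x' i = x i) then p (o, x', r) else 0 := by
        have := Finset.single_le_sum (f := fun x' : ∀ i, V i =>
          if (∀ i, r i = true → x' i = x i) then p (o, x', r) else 0)
          (fun x' _ => by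
            split
            · exact (hpos _).le
            · exact le_rfl) (Finset.mem_univ x)
        simpa using this
      exact lt_of_lt_of_le (hpos _) hle
    rw [hD, condPred, div_mul_cancel₀ _ (ne_of_gt hDpos)]
  · rintro ⟨f, hf⟩
    exact ⟨fun q => condPred (f q), fun p hp r o x => by
      show condPred p r o x = condPred (f (obsLaw p)) r o x
      rw [← hf p hp]⟩
end

section
/- If a query Q over variables in O ∪ X can be decomposed into a product of terms Q_j = p(S_j | T_j) such that each T_j contains the event R_W = 1 for every partially observed variable W appearing in Q_j, then Q is identifiable from the observed data law. -/
/- All variables of `O ∪ X` are indexed by `ι` with values `V i`; `PO : Finset ι`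
is the set of partially observed variables (those in `X`). A full law is a pmf
`p : (∀ i, V i) × (ι → Bool) → ℝ` supported on response patterns that equal `1`
on the fully observed variables. -/

attribute [local instance] Classical.propDecidable

/-- The observed data law induced by a full law. -/
noncomputable def obsLaw4 {ι : Type} [Fintype ι] [DecidableEq ι]
    {V : ι → Type} [∀ i, Fintype (V i)]
    (p : (∀ i, V i) × (ι → Bool) → ℝ) : (∀ i, Option (V i)) × (ι → Bool) → ℝ :=
  fun w => ∑ x : ∀ i, V i,
    if (∀ i, w.1 i = if w.2 i then some (x i) else none) then p (x, w.2) else 0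

/-- The term `Q_j = p(S_j | T_j, R_W = 1 for all partially observed W in Q_j)`,
evaluated at the value assignment `v`: the conditioning set contains the event
`R_W = 1` for every partially observed variable appearing in the term. -/
noncomputable def mohanTerm {ι : Type} [Fintype ι] [DecidableEq ι]
    {V : ι → Type} [∀ i, Fintype (V i)]
    (p : (∀ i, V i) × (ι → Bool) → ℝ) (PO Sj Tj : Finset ι) (v : ∀ i, V i) : ℝ :=
  (∑ x : ∀ i, V i, ∑ r : ι → Bool,
      if (∀ i ∈ Sj ∪ Tj, x i = v i) ∧ (∀ i ∈ (Sj ∪ Tj) ∩ PO, r i = true)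
      then p (x, r) else 0) /
  (∑ x : ∀ i, V i, ∑ r : ι → Bool,
      if (∀ i ∈ Tj, x i = v i) ∧ (∀ i ∈ (Sj ∪ Tj) ∩ PO, r i = true)
      then p (x, r) else 0)

lemma key_lemma {ι : Type} [Fintype ι] [DecidableEq ι]
    {V : ι → Type} [∀ i, Fintype (V i)]
    (PO : Finset ι) (p : (∀ i, V i) × (ι → Bool) → ℝ)
    (hp0 : ∀ x r, (∃ i, i ∉ PO ∧ r i = false) → p (x, r) = 0)
    (A B : Finset ι) (hAB : A ∩ PO ⊆ B) (v : ∀ i, V i) :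
    (∑ w1 : ∀ i, Option (V i), ∑ r : ι → Bool,
        if (∀ i ∈ A, w1 i = some (v i)) ∧ (∀ i ∈ B, r i = true)
        then obsLaw4 p (w1, r) else 0)
      = ∑ x : ∀ i, V i, ∑ r : ι → Bool,
        if (∀ i ∈ A, x i = v i) ∧ (∀ i ∈ B, r i = true) then p (x, r) else 0 := by
  have step1 : ∀ (w1 : ∀ i, Option (V i)) (r : ι → Bool),
      (if (∀ i ∈ A, w1 i = some (v i)) ∧ (∀ i ∈ B, r i = true)
        then obsLaw4 p (w1, r) else 0)
      = ∑ x : ∀ i, V i,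
          if ((∀ i, w1 i = if r i then some (x i) else none) ∧
              (∀ i ∈ A, w1 i = some (v i)) ∧ (∀ i ∈ B, r i = true))
          then p (x, r) else 0 := by
    intro w1 r
    unfold obsLaw4
    by_cases h : (∀ i ∈ A, w1 i = some (v i)) ∧ (∀ i ∈ B, r i = true)
    · rw [if_pos h]
      refine Finset.sum_congr rfl fun x _ => ?_
      by_cases h2 : ∀ i, w1 i = if r i then some (x i) else none
      · rw [if_pos h2, if_pos ⟨h2, h⟩]
      · rw [if_neg h2, if_neg (fun hc => h2 hc.1)]
    · rw [if_neg h]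
      refine (Finset.sum_eq_zero fun x _ => ?_).symm
      rw [if_neg (fun hc => h hc.2)]
  simp only [step1]
  rw [Finset.sum_comm]
  have : ∀ r : ι → Bool,
      (∑ w1 : ∀ i, Option (V i), ∑ x : ∀ i, V i,
        if ((∀ i, w1 i = if r i then some (x i) else none) ∧
            (∀ i ∈ A, w1 i = some (v i)) ∧ (∀ i ∈ B, r i = true))
        then p (x, r) else 0)
      = ∑ x : ∀ i, V i,
        if (∀ i ∈ A, x i = v i) ∧ (∀ i ∈ B, r i = true) then p (x, r) else 0 := by
    intro r
    rw [Finset.sum_comm]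
    refine Finset.sum_congr rfl fun x _ => ?_
    by_cases hr : ∃ i, i ∉ PO ∧ r i = false
    · rw [hp0 x r hr]
      simp
    · push_neg at hr
      have hrt : ∀ i, i ∉ PO → r i = true := by
        intro i hi
        cases h : r i with
        | false => exact absurd h (hr i hi)
        | true => rfl
      set g : ∀ i, Option (V i) := fun i => if r i then some (x i) else none with hg
      rw [Finset.sum_eq_single g]
      · apply if_congr _ rfl rfl
        have hri : (∀ i ∈ B, r i = true) → ∀ i ∈ A, r i = true := by
          intro hB i hi
          by_cases hpo : i ∈ PO
          · exact hB i (hAB (Finset.mem_inter.mpr ⟨hi, hpo⟩))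
          · exact hrt i hpo
        constructor
        · rintro ⟨-, hA, hB⟩
          refine ⟨fun i hi => ?_, hB⟩
          have h1 := hA i hi
          rw [hg] at h1
          simp only [hri hB i hi, if_true] at h1
          exact Option.some_injective _ h1
        · rintro ⟨hA, hB⟩
          refine ⟨fun i => rfl, fun i hi => ?_, hB⟩
          simp only [hg, hri hB i hi, if_true, hA i hi]
      · intro w1 _ hne
        rw [if_neg]
        rintro ⟨h1, -⟩
        exact hne (funext h1)
      · intro h
        exact absurd (Finset.mem_univ g) h
  rw [Finset.sum_congr rfl fun r _ => this r, Finset.sum_comm]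


/-- Mohan–Pearl–Tian decomposition: if a query `Q` over the
variables in `O ∪ X` decomposes into a product of terms `Q_j = p(S_j | T_j)`
such that `T_j` contains the event `R_W = 1` for every partially observed
variable `W` appearing in `Q_j`, then `Q` is identifiable from the observed
data law. -/
theorem stmt_4 {ι : Type} [Fintype ι] [DecidableEq ι]
    {V : ι → Type} [∀ i, Fintype (V i)]
    (PO : Finset ι)
    (M : Set ((∀ i, V i) × (ι → Bool) → ℝ))
    (hM : ∀ p ∈ M, (∑ v, p v = 1) ∧ (∀ v, 0 ≤ p v) ∧
      (∀ x r, 0 < p (x, r) ↔ ∀ i, i ∉ PO → r i = true))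
    {J : Type} [Fintype J] (S T : J → Finset ι) (hST : ∀ j, Disjoint (S j) (T j))
    (Q : ((∀ i, V i) × (ι → Bool) → ℝ) → (∀ i, V i) → ℝ)
    (hQ : ∀ p ∈ M, ∀ v, Q p v = ∏ j, mohanTerm p PO (S j) (T j) v) :
    ∃ f : ((∀ i, Option (V i)) × (ι → Bool) → ℝ) → (∀ i, V i) → ℝ,
      ∀ p ∈ M, Q p = f (obsLaw4 p) := by
  classical
  refine ⟨fun q v => ∏ j : J,
      (∑ w1 : ∀ i, Option (V i), ∑ r : ι → Bool,
        if (∀ i ∈ S j ∪ T j, w1 i = some (v i)) ∧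
            (∀ i ∈ (S j ∪ T j) ∩ PO, r i = true)
        then q (w1, r) else 0) /
      (∑ w1 : ∀ i, Option (V i), ∑ r : ι → Bool,
        if (∀ i ∈ T j, w1 i = some (v i)) ∧
            (∀ i ∈ (S j ∪ T j) ∩ PO, r i = true)
        then q (w1, r) else 0), ?_⟩
  intro p hp
  obtain ⟨-, hnn, hpos⟩ := hM p hp
  have hp0 : ∀ x r, (∃ i, i ∉ PO ∧ r i = false) → p (x, r) = 0 := by
    rintro x r ⟨i, hi, hri⟩
    refine le_antisymm ?_ (hnn _)
    by_contra h
    push_neg at h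
    have := (hpos x r).mp h i hi
    rw [hri] at this
    exact Bool.false_ne_true this
  funext v
  rw [hQ p hp v]
  refine Finset.prod_congr rfl fun j _ => ?_
  unfold mohanTerm
  rw [← key_lemma PO p hp0 (S j ∪ T j) ((S j ∪ T j) ∩ PO)
      (subset_refl _) v,
    ← key_lemma PO p hp0 (T j) ((S j ∪ T j) ∩ PO)
      (fun i hi => by
        rw [Finset.mem_inter] at hi ⊢
        exact ⟨Finset.mem_union_right _ hi.1, hi.2⟩) v]
end

section
/- Suppose the variables of X ∪ O can be ordered X_(1) < ... < X_(K) such that X_(1) is independent of R_{X_(1)}, and for each k = 2,...,K, X_(k) is conditionally independent of (R_{X_(k)}, R_{X_{≺(k)}}) given the preceding variables X_{≺(k)}. Then the target law p(O, X) factorizes as p(X_(1)) · ∏_{k=2}^{K} p(X_(k) | X_{≺(k)}), where each factor satisfies p(X_(k) | X_{≺(k)}) = p(X_(k) | X_{≺(k)}, R_{X_{≺(k)}∪{X_(k)}} = 1), and hence the target law is identifiable from the observed data law. -/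
/- The variables of `X ∪ O` are ordered as `X_(1) < ⋯ < X_(K)` and indexed by
`Fin K`, with values `V k` and response indicators `Fin K → Bool` (the indicator
of a fully observed variable is constant `1`). -/

attribute [local instance] Classical.propDecidable

/-- The observed data law induced by a full law. -/
noncomputable def obsLaw5 {K : ℕ} {V : Fin K → Type} [∀ i, Fintype (V i)]
    (p : (∀ i, V i) × (Fin K → Bool) → ℝ) :
    (∀ i, Option (V i)) × (Fin K → Bool) → ℝ :=
  fun w => ∑ x : ∀ i, V i,
    if (∀ i, w.1 i = if w.2 i then some (x i) else none) then p (x, w.2) else 0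

/-- The conditional-independence conditions of the decomposable-imputation
theorem: `X_(1) ⫫ R_(1)` and `X_(k) ⫫ (R_{X_(k)}, R_{X_{≺(k)}}) | X_{≺(k)}` for
all `k`, written uniformly as
`X_(k) ⫫ (R_j)_{j ≤ k} | (X_j)_{j < k}` (for `k = 0` the conditioning set is
empty, giving marginal independence). -/
def DecompCI {K : ℕ} {V : Fin K → Type} [∀ i, Fintype (V i)]
    (p : (∀ i, V i) × (Fin K → Bool) → ℝ) : Prop :=
  ∀ (k : Fin K) (x : ∀ i, V i) (ρ : Fin K → Bool),
    (∑ v, if v.1 k = x k ∧ (∀ j, j < k → v.1 j = x j) ∧ (∀ j, j ≤ k → v.2 j = ρ j)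
        then p v else 0) *
      (∑ v, if (∀ j, j < k → v.1 j = x j) then p v else 0) =
    (∑ v, if v.1 k = x k ∧ (∀ j, j < k → v.1 j = x j) then p v else 0) *
      (∑ v, if (∀ j, j < k → v.1 j = x j) ∧ (∀ j, j ≤ k → v.2 j = ρ j) then p v else 0)

lemma sum_if_pos' {α : Type*} [Fintype α] (p : α → ℝ) (hp : ∀ a, 0 < p a)
    (c : α → Prop) [DecidablePred c] (a0 : α) (h : c a0) :
    0 < ∑ a, if c a then p a else 0 := by
  have h1 : (if c a0 then p a0 else 0) ≤ ∑ a, if c a then p a else 0 :=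
    Finset.single_le_sum (f := fun a => if c a then p a else 0)
      (fun a _ => by by_cases hc : c a <;> simp [hc, (hp a).le])
      (Finset.mem_univ a0)
  rw [if_pos h] at h1
  exact lt_of_lt_of_le (hp a0) h1

lemma prod_div_telescope' (f : ℕ → ℝ) :
    ∀ N, (∀ n, n ≤ N → f n ≠ 0) →
      ∏ n ∈ Finset.range N, f (n + 1) / f n = f N / f 0 := by
  intro N
  induction N with
  | zero => intro h; simp [div_self (h 0 le_rfl)]
  | succ N ih =>
      intro h
      rw [Finset.prod_range_succ, ih (fun n hn => h n (hn.trans (Nat.le_succ N)))]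
      have h0 : f 0 ≠ 0 := h 0 (Nat.zero_le _)
      have hN : f N ≠ 0 := h N (Nat.le_succ N)
      field_simp

lemma ratio_eq' {K : ℕ} {V : Fin K → Type} [∀ i, Fintype (V i)]
    (p : (∀ i, V i) × (Fin K → Bool) → ℝ)
    (hpos : ∀ v, 0 < p v) (hCI : DecompCI p) (k : Fin K) (x : ∀ i, V i) :
    (∑ v, if v.1 k = x k ∧ (∀ j, j < k → v.1 j = x j) then p v else 0) /
      (∑ v, if (∀ j, j < k → v.1 j = x j) then p v else 0) =
    (∑ v, if v.1 k = x k ∧ (∀ j, j < k → v.1 j = x j) ∧ (∀ j, j ≤ k → v.2 j = true)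
        then p v else 0) /
      (∑ v, if (∀ j, j < k → v.1 j = x j) ∧ (∀ j, j ≤ k → v.2 j = true)
          then p v else 0) := by
  have hB : 0 < ∑ v, if (∀ j, j < k → v.1 j = x j) then p v else 0 :=
    sum_if_pos' p hpos _ (x, fun _ => true) (fun j _ => rfl)
  have hBr : 0 < ∑ v, if (∀ j, j < k → v.1 j = x j) ∧ (∀ j, j ≤ k → v.2 j = true)
      then p v else 0 :=
    sum_if_pos' p hpos _ (x, fun _ => true) ⟨fun j _ => rfl, fun j _ => rfl⟩
  rw [div_eq_div_iff hB.ne' hBr.ne']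
  exact (hCI k x (fun _ => true)).symm

lemma factorize' {K : ℕ} {V : Fin K → Type} [∀ i, Fintype (V i)]
    (p : (∀ i, V i) × (Fin K → Bool) → ℝ)
    (hpos : ∀ v, 0 < p v) (hsum : ∑ v, p v = 1) (hCI : DecompCI p)
    (x : ∀ i, V i) :
    (∑ r : Fin K → Bool, p (x, r)) =
      ∏ k : Fin K,
        (∑ v, if v.1 k = x k ∧ (∀ j, j < k → v.1 j = x j) ∧ (∀ j, j ≤ k → v.2 j = true)
            then p v else 0) /
        (∑ v, if (∀ j, j < k → v.1 j = x j) ∧ (∀ j, j ≤ k → v.2 j = true)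
            then p v else 0) := by
  have hstep : (∏ k : Fin K,
        (∑ v, if v.1 k = x k ∧ (∀ j, j < k → v.1 j = x j) ∧ (∀ j, j ≤ k → v.2 j = true)
            then p v else 0) /
        (∑ v, if (∀ j, j < k → v.1 j = x j) ∧ (∀ j, j ≤ k → v.2 j = true)
            then p v else 0)) =
      ∏ k : Fin K,
        (∑ v, if v.1 k = x k ∧ (∀ j, j < k → v.1 j = x j) then p v else 0) /
        (∑ v, if (∀ j, j < k → v.1 j = x j) then p v else 0) :=
    Finset.prod_congr rfl fun k _ => (ratio_eq' p hpos hCI k x).symm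
  rw [hstep]
  set Bn : ℕ → ℝ := fun n => ∑ v : (∀ i, V i) × (Fin K → Bool),
      if (∀ j : Fin K, (j : ℕ) < n → v.1 j = x j) then p v else 0 with hBndef
  have hA : ∀ k : Fin K,
      (∑ v : (∀ i, V i) × (Fin K → Bool),
        if v.1 k = x k ∧ (∀ j, j < k → v.1 j = x j) then p v else 0) = Bn ((k : ℕ) + 1) := by
    intro k
    refine Finset.sum_congr rfl fun v _ => if_congr ?_ rfl rfl
    constructor
    · rintro ⟨h1, h2⟩ j hj
      by_cases hjk : j = k
      · subst hjk; exact h1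
      · have hne : (j : ℕ) ≠ (k : ℕ) := fun hh => hjk (Fin.ext hh)
        exact h2 j (by rw [Fin.lt_def]; omega)
    · intro h
      exact ⟨h k (by omega), fun j hj => h j (by rw [Fin.lt_def] at hj; omega)⟩
  have hBk : ∀ k : Fin K,
      (∑ v : (∀ i, V i) × (Fin K → Bool),
        if (∀ j, j < k → v.1 j = x j) then p v else 0) = Bn (k : ℕ) := by
    intro k
    refine Finset.sum_congr rfl fun v _ => if_congr ?_ rfl rfl
    exact forall_congr' fun j => imp_congr Fin.lt_def Iff.rfl
  have hBnpos : ∀ n, 0 < Bn n := fun n =>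
    sum_if_pos' p hpos _ (x, fun _ => true) (fun j _ => rfl)
  have hprod : (∏ k : Fin K,
        (∑ v, if v.1 k = x k ∧ (∀ j, j < k → v.1 j = x j) then p v else 0) /
        (∑ v, if (∀ j, j < k → v.1 j = x j) then p v else 0)) =
      ∏ n ∈ Finset.range K, Bn (n + 1) / Bn n := by
    rw [← Fin.prod_univ_eq_prod_range (fun n => Bn (n + 1) / Bn n) K]
    exact Finset.prod_congr rfl fun k _ => by rw [hA k, hBk k]
  rw [hprod, prod_div_telescope' Bn K (fun n _ => (hBnpos n).ne')]
  have hB0 : Bn 0 = 1 := by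
    rw [hBndef]
    simpa using hsum
  have hBK : Bn K = ∑ r : Fin K → Bool, p (x, r) := by
    have h1 : Bn K = ∑ v : (∀ i, V i) × (Fin K → Bool), if v.1 = x then p v else 0 := by
      refine Finset.sum_congr rfl fun v _ => if_congr ?_ rfl rfl
      constructor
      · intro h; exact funext fun j => h j j.isLt
      · intro h j _; rw [h]
    rw [h1, Fintype.sum_prod_type]
    rw [Finset.sum_eq_single x (fun a _ ha => by simp [ha]) (fun h => absurd (Finset.mem_univ x) h)]
    simp
  rw [hB0, hBK, div_one]

lemma obs_sum_eq' {K : ℕ} {V : Fin K → Type} [∀ i, Fintype (V i)]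
    (q : (∀ i, V i) × (Fin K → Bool) → ℝ)
    (c : (Fin K → Bool) → (∀ i, Option (V i)) → Prop)
    [∀ r y, Decidable (c r y)] :
    (∑ r : Fin K → Bool, ∑ y : ∀ i, Option (V i),
        if c r y then obsLaw5 q (y, r) else 0) =
    ∑ z : ∀ i, V i, ∑ r : Fin K → Bool,
        if c r (fun i => if r i then some (z i) else none) then q (z, r) else 0 := by
  have key : ∀ (r : Fin K → Bool),
      (∑ y : ∀ i, Option (V i), if c r y then obsLaw5 q (y, r) else 0) =
      ∑ z : ∀ i, V i,
        if c r (fun i => if r i then some (z i) else none) then q (z, r) else 0 := by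
    intro r
    have step1 : ∀ y : ∀ i, Option (V i), (if c r y then obsLaw5 q (y, r) else 0) =
        ∑ z : ∀ i, V i,
          if c r y ∧ (∀ i, y i = if r i then some (z i) else none) then q (z, r) else 0 := by
      intro y
      by_cases h : c r y
      · simp only [h, if_true, true_and]
        rfl
      · simp [h]
    simp_rw [step1]
    rw [Finset.sum_comm]
    refine Finset.sum_congr rfl fun z _ => ?_
    have step2 : ∀ y : ∀ i, Option (V i),
        (if c r y ∧ (∀ i, y i = if r i then some (z i) else none) then q (z, r) else 0) =
        if y = (fun i => if r i then some (z i) else none) then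
          (if c r y then q (z, r) else 0) else 0 := by
      intro y
      by_cases h : y = (fun i => if r i then some (z i) else none)
      · subst h; simp [funext_iff]
      · have h2 : ¬ (∀ i, y i = if r i then some (z i) else none) :=
          fun hh => h (funext hh)
        simp [h, h2]
    simp_rw [step2]
    rw [Finset.sum_ite_eq' Finset.univ (fun i => if r i then some (z i) else none)
      (fun y => if c r y then q (z, r) else 0)]
    simp
  simp_rw [key]
  exact Finset.sum_comm

lemma obsA_eq' {K : ℕ} {V : Fin K → Type} [∀ i, Fintype (V i)]
    (q : (∀ i, V i) × (Fin K → Bool) → ℝ) (x : ∀ i, V i) (k : Fin K) :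
    (∑ r : Fin K → Bool, ∑ y : ∀ i, Option (V i),
        if ((∀ j, j ≤ k → r j = true) ∧ y k = some (x k) ∧ (∀ j, j < k → y j = some (x j)))
          then obsLaw5 q (y, r) else 0) =
    ∑ v : (∀ i, V i) × (Fin K → Bool),
        if v.1 k = x k ∧ (∀ j, j < k → v.1 j = x j) ∧ (∀ j, j ≤ k → v.2 j = true)
          then q v else 0 := by
  rw [obs_sum_eq' q (fun r y => (∀ j, j ≤ k → r j = true) ∧ y k = some (x k) ∧
    (∀ j, j < k → y j = some (x j))), Fintype.sum_prod_type]
  refine Finset.sum_congr rfl fun z _ => Finset.sum_congr rfl fun r _ =>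
    if_congr ?_ rfl rfl
  constructor
  · rintro ⟨hr, hk, hlt⟩
    refine ⟨by simpa [hr k le_rfl] using hk, ?_, hr⟩
    intro j hj
    simpa [hr j hj.le] using hlt j hj
  · rintro ⟨hk, hlt, hr⟩
    refine ⟨hr, by simp [hr k le_rfl]; exact ⟨hr k le_rfl, hk⟩, ?_⟩
    intro j hj
    simp; exact ⟨hr j hj.le, hlt j hj⟩

lemma obsB_eq' {K : ℕ} {V : Fin K → Type} [∀ i, Fintype (V i)]
    (q : (∀ i, V i) × (Fin K → Bool) → ℝ) (x : ∀ i, V i) (k : Fin K) :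
    (∑ r : Fin K → Bool, ∑ y : ∀ i, Option (V i),
        if ((∀ j, j ≤ k → r j = true) ∧ (∀ j, j < k → y j = some (x j)))
          then obsLaw5 q (y, r) else 0) =
    ∑ v : (∀ i, V i) × (Fin K → Bool),
        if (∀ j, j < k → v.1 j = x j) ∧ (∀ j, j ≤ k → v.2 j = true)
          then q v else 0 := by
  rw [obs_sum_eq' q (fun r y => (∀ j, j ≤ k → r j = true) ∧
    (∀ j, j < k → y j = some (x j))), Fintype.sum_prod_type]
  refine Finset.sum_congr rfl fun z _ => Finset.sum_congr rfl fun r _ =>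
    if_congr ?_ rfl rfl
  constructor
  · rintro ⟨hr, hlt⟩
    refine ⟨?_, hr⟩
    intro j hj
    simpa [hr j hj.le] using hlt j hj
  · rintro ⟨hlt, hr⟩
    refine ⟨hr, ?_⟩
    intro j hj
    simp; exact ⟨hr j hj.le, hlt j hj⟩

/-- under the ordering assumptions `X_(1) ⫫ R_{X_(1)}` and
`X_(k) ⫫ (R_{X_(k)}, R_{X_{≺(k)}}) | X_{≺(k)}`, the target law factorizes as
`p(X_(1)) ∏_k p(X_(k) | X_{≺(k)})`, each factor satisfies
`p(X_(k) | X_{≺(k)}) = p(X_(k) | X_{≺(k)}, R_{X_{≺(k)} ∪ {X_(k)}} = 1)`, and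
hence the target law is identifiable from the observed data law. -/
theorem stmt_5 {K : ℕ} {V : Fin K → Type} [∀ i, Fintype (V i)]
    (p : (∀ i, V i) × (Fin K → Bool) → ℝ)
    (hpos : ∀ v, 0 < p v) (hsum : ∑ v, p v = 1)
    (hCI : DecompCI p) :
    (∀ x : ∀ i, V i,
      (∑ r : Fin K → Bool, p (x, r)) =
        ∏ k : Fin K,
          (∑ v, if v.1 k = x k ∧ (∀ j, j < k → v.1 j = x j) ∧ (∀ j, j ≤ k → v.2 j = true)
              then p v else 0) /
          (∑ v, if (∀ j, j < k → v.1 j = x j) ∧ (∀ j, j ≤ k → v.2 j = true)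
              then p v else 0))
    ∧ (∀ (k : Fin K) (x : ∀ i, V i),
      (∑ v, if v.1 k = x k ∧ (∀ j, j < k → v.1 j = x j) then p v else 0) /
        (∑ v, if (∀ j, j < k → v.1 j = x j) then p v else 0) =
      (∑ v, if v.1 k = x k ∧ (∀ j, j < k → v.1 j = x j) ∧ (∀ j, j ≤ k → v.2 j = true)
          then p v else 0) /
        (∑ v, if (∀ j, j < k → v.1 j = x j) ∧ (∀ j, j ≤ k → v.2 j = true)
            then p v else 0))
    ∧ (∃ f : ((∀ i, Option (V i)) × (Fin K → Bool) → ℝ) → (∀ i, V i) → ℝ,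
        ∀ q : (∀ i, V i) × (Fin K → Bool) → ℝ,
          (∀ v, 0 < q v) → (∑ v, q v = 1) → DecompCI q →
          (fun x => ∑ r : Fin K → Bool, q (x, r)) = f (obsLaw5 q)) := by
  refine ⟨factorize' p hpos hsum hCI, fun k x => ratio_eq' p hpos hCI k x, ?_⟩
  refine ⟨fun q' x => ∏ k : Fin K,
      (∑ r : Fin K → Bool, ∑ y : ∀ i, Option (V i),
        if ((∀ j, j ≤ k → r j = true) ∧ y k = some (x k) ∧ (∀ j, j < k → y j = some (x j)))
          then q' (y, r) else 0) /
      (∑ r : Fin K → Bool, ∑ y : ∀ i, Option (V i),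
        if ((∀ j, j ≤ k → r j = true) ∧ (∀ j, j < k → y j = some (x j)))
          then q' (y, r) else 0), ?_⟩
  intro q hq hqs hqCI
  funext x
  dsimp only
  rw [factorize' q hq hqs hqCI x]
  refine Finset.prod_congr rfl fun k _ => ?_
  rw [← obsA_eq' q x k, ← obsB_eq' q x k]
end

section
/- In the missing data model over (X, Y, R_X, R_Y) where Y depends on X, R_Y depends only on X, R_X is independent of everything else, and the model satisfies the conditional independences (X, Y) ⫫ R_X and (Y, R_X) ⫫ R_Y | X, the target law satisfies p(X, Y) = p(Y | X, R_X = 1, R_Y = 1) · p(X | R_X = 1), and hence is identifiable from the observed data law. -/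
/-- in the missing data model of the DAG `X → Y`, `X → R_Y` (no
other edges into `R_X`, `R_Y`), which satisfies `(X, Y) ⫫ R_X` and
`(Y, R_X) ⫫ R_Y | X`, the target law satisfies
`p(X, Y) = p(Y | X, R_X = 1, R_Y = 1) · p(X | R_X = 1)` and is hence
identifiable from the observed data law. `p` is the joint pmf of
`(X, Y, R_X, R_Y)` with `true = 1`. -/
theorem stmt_8 {XT YT : Type} [Fintype XT] [Fintype YT]
    (p : XT × YT × Bool × Bool → ℝ)
    (hpos : ∀ v, 0 < p v) (hsum : ∑ v, p v = 1)
    (hXYindRX : ∀ x y rx, (∑ ry, p (x, y, rx, ry)) =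
      (∑ rx', ∑ ry, p (x, y, rx', ry)) * (∑ x', ∑ y', ∑ ry, p (x', y', rx, ry)))
    (hYRXindRY : ∀ x y rx ry,
      p (x, y, rx, ry) * (∑ y', ∑ rx', ∑ ry', p (x, y', rx', ry')) =
        (∑ ry', p (x, y, rx, ry')) * (∑ y', ∑ rx', p (x, y', rx', ry))) :
    ∀ x y, (∑ rx, ∑ ry, p (x, y, rx, ry)) =
      (p (x, y, true, true) / ∑ y', p (x, y', true, true)) *
        ((∑ y', ∑ ry, p (x, y', true, ry)) /
          (∑ x', ∑ y', ∑ ry, p (x', y', true, ry))) := by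
  intro x y
  have hBoolpos : ∀ (f : Bool → ℝ), (∀ b, 0 < f b) → 0 < ∑ b, f b := by
    intro f hf
    exact Finset.sum_pos (fun b _ => hf b) ⟨true, Finset.mem_univ _⟩
  have hYpos : ∀ (f : YT → ℝ), (∀ a, 0 < f a) → 0 < ∑ a, f a := by
    intro f hf
    exact Finset.sum_pos (fun a _ => hf a) ⟨y, Finset.mem_univ _⟩
  have hXpos : ∀ (f : XT → ℝ), (∀ a, 0 < f a) → 0 < ∑ a, f a := by
    intro f hf
    exact Finset.sum_pos (fun a _ => hf a) ⟨x, Finset.mem_univ _⟩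
  set A := p (x, y, true, true) with hA
  set B := ∑ ry', p (x, y, true, ry') with hB
  set S := ∑ y', p (x, y', true, true) with hS
  set N := ∑ y', ∑ ry, p (x, y', true, ry) with hN
  set D := ∑ x', ∑ y', ∑ ry, p (x', y', true, ry) with hD
  set px := ∑ y', ∑ rx', ∑ ry', p (x, y', rx', ry') with hpx
  set pxr := ∑ y', ∑ rx', p (x, y', rx', true) with hpxr
  set T := ∑ rx, ∑ ry, p (x, y, rx, ry) with hT
  have hSpos : 0 < S := hYpos _ fun a => hpos _
  have hDpos : 0 < D := hXpos _ fun a => hYpos _ fun b => hBoolpos _ fun c => hpos _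
  have hNpos : 0 < N := hYpos _ fun a => hBoolpos _ fun b => hpos _
  have hpxpos : 0 < px := hYpos _ fun a => hBoolpos _ fun b => hBoolpos _ fun c => hpos _
  -- h1 : A * px = B * pxr
  have h1 : A * px = B * pxr := hYRXindRY x y true true
  -- h2 : S * px = N * pxr
  have h2 : S * px = N * pxr := by
    have := fun y' => hYRXindRY x y' true true
    calc S * px = ∑ y', p (x, y', true, true) * px := by rw [Finset.sum_mul]
    _ = ∑ y', (∑ ry', p (x, y', true, ry')) * pxr := by
        exact Finset.sum_congr rfl fun y' _ => this y'
    _ = N * pxr := by rw [Finset.sum_mul]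
  -- h3 : B = T * D
  have h3 : B = T * D := hXYindRX x y true
  have key : T * (S * D) * px = A * N * px := by
    linear_combination T * D * h2 - N * h1 - N * pxr * h3
  have key2 : T * (S * D) = A * N := mul_right_cancel₀ (ne_of_gt hpxpos) key
  rw [div_mul_div_comm, eq_div_iff (by positivity)]
  linarith [key2]
end

section
/- In the colluder model with edges X → Y, X → R_Y, R_X → R_Y, the target law is still identifiable: p(X, Y) = p(Y | X, R_X = 1, R_Y = 1) · p(X | R_X = 1). -/
attribute [local instance] Classical.propDecidable

/-- A joint pmf over `(X, Y, R_X, R_Y)` is Markov with respect to the colluder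
DAG `X → Y`, `X → R_Y`, `R_X → R_Y` if it factorizes as
`p(X) p(Y | X) p(R_X) p(R_Y | X, R_X)`. -/
def MarkovColluder (p : Bool × Bool × Bool × Bool → ℝ) : Prop :=
  ∃ (a : Bool → ℝ) (b : Bool → Bool → ℝ) (c : Bool → ℝ) (d : Bool → Bool → Bool → ℝ),
    (∀ x, 0 ≤ a x) ∧ (∀ x y, 0 ≤ b x y) ∧ (∀ rx, 0 ≤ c rx) ∧ (∀ x rx ry, 0 ≤ d x rx ry) ∧
    (∑ x, a x = 1) ∧ (∀ x, ∑ y, b x y = 1) ∧ (∑ rx, c rx = 1) ∧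
    (∀ x rx, ∑ ry, d x rx ry = 1) ∧
    ∀ x y rx ry, p (x, y, rx, ry) = a x * b x y * c rx * d x rx ry

/-- The observed data law `p(X*, Y*, R_X, R_Y)` induced by a full law over
binary `(X, Y, R_X, R_Y)`, where `X* = X` if `R_X = 1` and NA (`none`)
otherwise, and similarly for `Y*`. -/
noncomputable def obsB (p : Bool × Bool × Bool × Bool → ℝ) :
    Option Bool × Option Bool × Bool × Bool → ℝ :=
  fun w => ∑ x : Bool, ∑ y : Bool,
    if (w.1 = if w.2.2.1 then some x else none) ∧
       (w.2.1 = if w.2.2.2 then some y else none)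
    then p (x, y, w.2.2.1, w.2.2.2) else 0

/-- in the colluder model (`X → Y`, `X → R_Y`, `R_X → R_Y`), the
target law is still identifiable via
`p(X, Y) = p(Y | X, R_X = 1, R_Y = 1) · p(X | R_X = 1)`. -/
theorem stmt_11 (p : Bool × Bool × Bool × Bool → ℝ)
    (hM : MarkovColluder p) (hpos : ∀ v, 0 < p v) :
    ∀ x y, (∑ rx, ∑ ry, p (x, y, rx, ry)) =
      (p (x, y, true, true) / ∑ y', p (x, y', true, true)) *
        ((∑ y', ∑ ry, p (x, y', true, ry)) /
          (∑ x', ∑ y', ∑ ry, p (x', y', true, ry))) := by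
  obtain ⟨a, b, c, d, ha0, hb0, hc0, hd0, ha1, hb1, hc1, hd1, hp⟩ := hM
  intro x y
  -- positivity of each factor
  have key : ∀ x y rx ry, 0 < a x * b x y * c rx * d x rx ry := by
    intro x y rx ry
    have := hpos (x, y, rx, ry)
    rwa [hp] at this
  have hax : 0 < a x := by
    have h := key x y true true
    rcases lt_or_eq_of_le (ha0 x) with h' | h'
    · exact h'
    · exfalso; rw [← h'] at h; simp at h
  have hcT : 0 < c true := by
    have h := key x y true true
    rcases lt_or_eq_of_le (hc0 true) with h' | h'
    · exact h'
    · exfalso; rw [← h'] at h; simp at h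
  have hdT : 0 < d x true true := by
    have h := key x y true true
    rcases lt_or_eq_of_le (hd0 x true true) with h' | h'
    · exact h'
    · exfalso; rw [← h'] at h; simp at h
  have hbx : b x true + b x false = 1 := by
    have := hb1 x; simpa [Fintype.sum_bool] using this
  have hdx : d x true true + d x true false = 1 := by
    have := hd1 x true; simpa [Fintype.sum_bool] using this
  have hdxF : d x false true + d x false false = 1 := by
    have := hd1 x false; simpa [Fintype.sum_bool] using this
  have hdt : ∀ x', d x' true true + d x' true false = 1 := by
    intro x'; have := hd1 x' true; simpa [Fintype.sum_bool] using this
  have hcS : c true + c false = 1 := by simpa [Fintype.sum_bool] using hc1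
  have haS : a true + a false = 1 := by simpa [Fintype.sum_bool] using ha1
  have hbS : ∀ x', b x' true + b x' false = 1 := by
    intro x'; have := hb1 x'; simpa [Fintype.sum_bool] using this
  have LHS : (∑ rx, ∑ ry, p (x, y, rx, ry)) = a x * b x y := by
    simp only [Fintype.sum_bool, hp]
    linear_combination (a x * b x y * c true) * hdx + (a x * b x y * c false) * hdxF +
      (a x * b x y) * hcS
  have S1 : (∑ y', p (x, y', true, true)) = a x * c true * d x true true := by
    simp only [Fintype.sum_bool, hp]
    linear_combination (a x * c true * d x true true) * hbx
  have S2 : (∑ y', ∑ ry, p (x, y', true, ry)) = a x * c true := by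
    simp only [Fintype.sum_bool, hp]
    linear_combination (a x * c true * b x true) * hdx + (a x * c true * b x false) * hdx +
      (a x * c true) * hbx
  have S3 : (∑ x', ∑ y', ∑ ry, p (x', y', true, ry)) = c true := by
    simp only [Fintype.sum_bool, hp]
    linear_combination (c true * a true * b true true) * hdt true +
      (c true * a true * b true false) * hdt true +
      (c true * a false * b false true) * hdt false +
      (c true * a false * b false false) * hdt false +
      (c true * a true) * hbS true + (c true * a false) * hbS false + c true * haS
  rw [LHS, S1, S2, S3, hp]
  field_simp
end

section
/- If X ⫫ R_X and Y ⫫ (R_X, R_Y) | X, then p(X) = p(X | R_X = 1) and p(Y | X) = p(Y | X, R_X = 1, R_Y = 1), and consequently p(X, Y) = p(Y | X, R_X = 1, R_Y = 1) · p(X | R_X = 1). -/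
/-- if `X ⫫ R_X` and `Y ⫫ (R_X, R_Y) | X`, then
`p(X) = p(X | R_X = 1)` and `p(Y | X) = p(Y | X, R_X = 1, R_Y = 1)`, and
consequently `p(X, Y) = p(Y | X, R_X = 1, R_Y = 1) · p(X | R_X = 1)`.
Here `p` is the strictly positive joint pmf of `(X, Y, R_X, R_Y)` with
`true = 1`. -/
theorem stmt_12 {XT YT : Type} [Fintype XT] [Fintype YT]
    (p : XT × YT × Bool × Bool → ℝ)
    (hpos : ∀ v, 0 < p v) (hsum : ∑ v, p v = 1)
    (hXindRX : ∀ x rx, (∑ y, ∑ ry, p (x, y, rx, ry)) =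
      (∑ y, ∑ rx', ∑ ry, p (x, y, rx', ry)) * (∑ x', ∑ y, ∑ ry, p (x', y, rx, ry)))
    (hYindR : ∀ x y rx ry,
      p (x, y, rx, ry) * (∑ y', ∑ rx', ∑ ry', p (x, y', rx', ry')) =
        (∑ rx', ∑ ry', p (x, y, rx', ry')) * (∑ y', p (x, y', rx, ry))) :
    (∀ x, (∑ y, ∑ rx, ∑ ry, p (x, y, rx, ry)) =
      (∑ y, ∑ ry, p (x, y, true, ry)) / (∑ x', ∑ y, ∑ ry, p (x', y, true, ry)))
    ∧ (∀ x y, (∑ rx, ∑ ry, p (x, y, rx, ry)) /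
        (∑ y', ∑ rx, ∑ ry, p (x, y', rx, ry)) =
      p (x, y, true, true) / (∑ y', p (x, y', true, true)))
    ∧ (∀ x y, (∑ rx, ∑ ry, p (x, y, rx, ry)) =
      (p (x, y, true, true) / ∑ y', p (x, y', true, true)) *
        ((∑ y', ∑ ry, p (x, y', true, ry)) /
          (∑ x', ∑ y', ∑ ry, p (x', y', true, ry)))) := by
  have hne : Nonempty (XT × YT × Bool × Bool) := by
    by_contra h
    rw [not_nonempty_iff] at h
    simp [Finset.univ_eq_empty] at hsum
  have hneX : Nonempty XT := ⟨hne.some.1⟩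
  have hneY : Nonempty YT := ⟨hne.some.2.1⟩
  have sum_pos : ∀ {α : Type} [Fintype α] [Nonempty α] (f : α → ℝ),
      (∀ a, 0 < f a) → 0 < ∑ a, f a := by
    intro α _ _ f hf
    exact Finset.sum_pos (fun a _ => hf a) Finset.univ_nonempty
  have hpX : ∀ x, 0 < ∑ y, ∑ rx, ∑ ry, p (x, y, rx, ry) := fun x =>
    sum_pos _ fun y => sum_pos _ fun rx => sum_pos _ fun ry => hpos _
  have hB : 0 < ∑ x', ∑ y, ∑ ry, p (x', y, true, ry) := by
    exact sum_pos _ fun x => sum_pos _ fun y => sum_pos _ fun ry => hpos _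
  have hS : ∀ x, 0 < ∑ y', p (x, y', true, true) := fun x => sum_pos _ fun y => hpos _
  have part1 : ∀ x, (∑ y, ∑ rx, ∑ ry, p (x, y, rx, ry)) =
      (∑ y, ∑ ry, p (x, y, true, ry)) / (∑ x', ∑ y, ∑ ry, p (x', y, true, ry)) := by
    intro x
    rw [eq_div_iff (hB.ne')]
    exact (hXindRX x true).symm
  have part2 : ∀ x y, (∑ rx, ∑ ry, p (x, y, rx, ry)) /
        (∑ y', ∑ rx, ∑ ry, p (x, y', rx, ry)) =
      p (x, y, true, true) / (∑ y', p (x, y', true, true)) := by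
    intro x y
    rw [div_eq_div_iff (hpX x).ne' (hS x).ne']
    exact (hYindR x y true true).symm
  refine ⟨part1, part2, fun x y => ?_⟩
  have h2 := part2 x y
  rw [div_eq_div_iff (hpX x).ne' (hS x).ne'] at h2
  rw [← part1 x, div_mul_eq_mul_div, eq_div_iff (hS x).ne']
  exact h2
end

section
/- In the four-variable model of the previous context (edges X → Y, X → W, X → R_Y, W → Z, W → R_X, Z → Y, Z → R_W, R_Z → R_W), the target law is identifiable via p(X, W, Z, Y) = p(Z | R_Z = 1) · p(W | Z, R_Z = 1, R_W = 1) · p(X | Z, W, R_Z = 1, R_W = 1, R_X = 1) · p(Y | Z, W, X, R_Z = 1, R_W = 1, R_X = 1, R_Y = 1). -/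
lemma sum_norm {α : Type*} [Fintype α] {g F : α → ℝ} {K : ℝ}
    (hg : ∑ a, g a = 1) (hF : ∀ a, F a = K * g a) : ∑ a, F a = K := by
  simp only [hF, ← Finset.mul_sum, hg, mul_one]

lemma sum_fac {α : Type*} [Fintype α] {g F : α → ℝ} {K : ℝ}
    (hF : ∀ a, F a = K * g a) : ∑ a, F a = K * ∑ a, g a := by
  simp only [hF, ← Finset.mul_sum]


/-- A joint pmf over `(X, W, Z, Y, R_X, R_W, R_Z, R_Y)` is Markov with respect
to the DAG with edges `X → Y`, `X → W`, `X → R_Y`, `W → Z`, `W → R_X`,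
`Z → Y`, `Z → R_W`, `R_Z → R_W` (and `R_Z` without parents) if it factorizes
as `p(X) p(W|X) p(Z|W) p(Y|X,Z) p(R_X|W) p(R_Y|X) p(R_Z) p(R_W|Z,R_Z)`. -/
def Markov4 {TX TW TZ TY : Type} [Fintype TX] [Fintype TW] [Fintype TZ] [Fintype TY]
    (p : TX × TW × TZ × TY × Bool × Bool × Bool × Bool → ℝ) : Prop :=
  ∃ (fX : TX → ℝ) (fW : TX → TW → ℝ) (fZ : TW → TZ → ℝ) (fY : TX → TZ → TY → ℝ)
    (gX : TW → Bool → ℝ) (gY : TX → Bool → ℝ) (gZ : Bool → ℝ)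
    (gW : TZ → Bool → Bool → ℝ),
    (∀ x, 0 ≤ fX x) ∧ (∀ x w, 0 ≤ fW x w) ∧ (∀ w z, 0 ≤ fZ w z) ∧
    (∀ x z y, 0 ≤ fY x z y) ∧ (∀ w rx, 0 ≤ gX w rx) ∧ (∀ x ry, 0 ≤ gY x ry) ∧
    (∀ rz, 0 ≤ gZ rz) ∧ (∀ z rz rw, 0 ≤ gW z rz rw) ∧
    (∑ x, fX x = 1) ∧ (∀ x, ∑ w, fW x w = 1) ∧ (∀ w, ∑ z, fZ w z = 1) ∧
    (∀ x z, ∑ y, fY x z y = 1) ∧ (∀ w, ∑ rx, gX w rx = 1) ∧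
    (∀ x, ∑ ry, gY x ry = 1) ∧ (∑ rz, gZ rz = 1) ∧
    (∀ z rz, ∑ rw, gW z rz rw = 1) ∧
    ∀ x w z y rx rw rz ry,
      p (x, w, z, y, rx, rw, rz, ry) =
        fX x * fW x w * fZ w z * fY x z y * gX w rx * gY x ry * gZ rz * gW z rz rw

/-- in the four-variable model of the DAG with edges `X → Y`,
`X → W`, `X → R_Y`, `W → Z`, `W → R_X`, `Z → Y`, `Z → R_W`, `R_Z → R_W`, the
target law is identifiable via
`p(X, W, Z, Y) = p(Z | R_Z = 1) · p(W | Z, R_Z = 1, R_W = 1)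
  · p(X | Z, W, R_Z = 1, R_W = 1, R_X = 1)
  · p(Y | Z, W, X, R_Z = 1, R_W = 1, R_X = 1, R_Y = 1)`,
where each factor on the right-hand side is a function of the observed data
law. -/
theorem stmt_15 {TX TW TZ TY : Type} [Fintype TX] [Fintype TW] [Fintype TZ] [Fintype TY]
    (p : TX × TW × TZ × TY × Bool × Bool × Bool × Bool → ℝ)
    (hMarkov : Markov4 p) (hpos : ∀ v, 0 < p v) :
    ∀ x w z y,
      (∑ rx, ∑ rw, ∑ rz, ∑ ry, p (x, w, z, y, rx, rw, rz, ry)) =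
        ((∑ x', ∑ w', ∑ y', ∑ rx, ∑ rw, ∑ ry, p (x', w', z, y', rx, rw, true, ry)) /
          (∑ x', ∑ w', ∑ z', ∑ y', ∑ rx, ∑ rw, ∑ ry, p (x', w', z', y', rx, rw, true, ry))) *
        ((∑ x', ∑ y', ∑ rx, ∑ ry, p (x', w, z, y', rx, true, true, ry)) /
          (∑ x', ∑ w', ∑ y', ∑ rx, ∑ ry, p (x', w', z, y', rx, true, true, ry))) *
        ((∑ y', ∑ ry, p (x, w, z, y', true, true, true, ry)) /
          (∑ x', ∑ y', ∑ ry, p (x', w, z, y', true, true, true, ry))) *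
        (p (x, w, z, y, true, true, true, true) /
          (∑ y', p (x, w, z, y', true, true, true, true))) := by
  obtain ⟨fX, fW, fZ, fY, gX, gY, gZ, gW, hfX0, hfW0, hfZ0, hfY0, hgX0, hgY0,
    hgZ0, hgW0, hfX1, hfW1, hfZ1, hfY1, hgX1, hgY1, hgZ1, hgW1, hp⟩ := hMarkov
  intro x w z y
  -- positivity facts
  have h8 := hpos (x, w, z, y, true, true, true, true)
  rw [hp] at h8
  have hfXne : fX x ≠ 0 := fun h => by rw [h] at h8; simp at h8
  have hfWne : fW x w ≠ 0 := fun h => by rw [h] at h8; simp at h8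
  have hfZne : fZ w z ≠ 0 := fun h => by rw [h] at h8; simp at h8
  have hgXne : gX w true ≠ 0 := fun h => by rw [h] at h8; simp at h8
  have hgYne : gY x true ≠ 0 := fun h => by rw [h] at h8; simp at h8
  have hgZne : gZ true ≠ 0 := fun h => by rw [h] at h8; simp at h8
  have hgWne : gW z true true ≠ 0 := fun h => by rw [h] at h8; simp at h8
  have hfXp : 0 < fX x := lt_of_le_of_ne (hfX0 x) (Ne.symm hfXne)
  have hfWp : 0 < fW x w := lt_of_le_of_ne (hfW0 x w) (Ne.symm hfWne)
  have hfZp : 0 < fZ w z := lt_of_le_of_ne (hfZ0 w z) (Ne.symm hfZne)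
  have hSXp : 0 < ∑ x', fX x' * fW x' w :=
    Finset.sum_pos' (fun i _ => mul_nonneg (hfX0 i) (hfW0 i w))
      ⟨x, Finset.mem_univ x, mul_pos hfXp hfWp⟩
  have hS2p : 0 < ∑ x', ∑ w', fX x' * fW x' w' * fZ w' z :=
    Finset.sum_pos'
      (fun i _ => Finset.sum_nonneg fun j _ =>
        mul_nonneg (mul_nonneg (hfX0 i) (hfW0 i j)) (hfZ0 j z))
      ⟨x, Finset.mem_univ x,
        Finset.sum_pos'
          (fun j _ => mul_nonneg (mul_nonneg (hfX0 x) (hfW0 x j)) (hfZ0 j z))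
          ⟨w, Finset.mem_univ w, mul_pos (mul_pos hfXp hfWp) hfZp⟩⟩
  have hSXne : (∑ x', fX x' * fW x' w) ≠ 0 := ne_of_gt hSXp
  have hS2ne : (∑ x', ∑ w', fX x' * fW x' w' * fZ w' z) ≠ 0 := ne_of_gt hS2p
  -- LHS
  have hL : (∑ rx, ∑ rw, ∑ rz, ∑ ry, p (x, w, z, y, rx, rw, rz, ry))
      = fX x * fW x w * fZ w z * fY x z y := by
    calc (∑ rx, ∑ rw, ∑ rz, ∑ ry, p (x, w, z, y, rx, rw, rz, ry))
        = ∑ rx, ∑ rw, ∑ rz, fX x * fW x w * fZ w z * fY x z y * gX w rx * gZ rz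
            * gW z rz rw :=
          Finset.sum_congr rfl fun rx _ => Finset.sum_congr rfl fun rw _ =>
            Finset.sum_congr rfl fun rz _ =>
              sum_norm (hgY1 x) (fun ry => by rw [hp]; ring)
      _ = ∑ rx, ∑ rz, ∑ rw, fX x * fW x w * fZ w z * fY x z y * gX w rx * gZ rz
            * gW z rz rw :=
          Finset.sum_congr rfl fun rx _ => Finset.sum_comm
      _ = ∑ rx, ∑ rz, fX x * fW x w * fZ w z * fY x z y * gX w rx * gZ rz :=
          Finset.sum_congr rfl fun rx _ => Finset.sum_congr rfl fun rz _ =>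
            sum_norm (hgW1 z rz) (fun rw => by ring)
      _ = ∑ rx, fX x * fW x w * fZ w z * fY x z y * gX w rx :=
          Finset.sum_congr rfl fun rx _ => sum_norm hgZ1 (fun rz => by ring)
      _ = _ := sum_norm (hgX1 w) (fun rx => by ring)
  -- A numerator
  have hAn : (∑ x', ∑ w', ∑ y', ∑ rx, ∑ rw, ∑ ry, p (x', w', z, y', rx, rw, true, ry))
      = gZ true * ∑ x', ∑ w', fX x' * fW x' w' * fZ w' z := by
    calc (∑ x', ∑ w', ∑ y', ∑ rx, ∑ rw, ∑ ry, p (x', w', z, y', rx, rw, true, ry))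
        = ∑ x', ∑ w', ∑ y', ∑ rx, ∑ rw,
            fX x' * fW x' w' * fZ w' z * fY x' z y' * gX w' rx * gZ true
              * gW z true rw :=
          Finset.sum_congr rfl fun x' _ => Finset.sum_congr rfl fun w' _ =>
            Finset.sum_congr rfl fun y' _ => Finset.sum_congr rfl fun rx _ =>
              Finset.sum_congr rfl fun rw _ =>
                sum_norm (hgY1 x') (fun ry => by rw [hp]; ring)
      _ = ∑ x', ∑ w', ∑ y', ∑ rx,
            fX x' * fW x' w' * fZ w' z * fY x' z y' * gX w' rx * gZ true :=
          Finset.sum_congr rfl fun x' _ => Finset.sum_congr rfl fun w' _ =>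
            Finset.sum_congr rfl fun y' _ => Finset.sum_congr rfl fun rx _ =>
              sum_norm (hgW1 z true) (fun rw => by ring)
      _ = ∑ x', ∑ w', ∑ y', fX x' * fW x' w' * fZ w' z * fY x' z y' * gZ true :=
          Finset.sum_congr rfl fun x' _ => Finset.sum_congr rfl fun w' _ =>
            Finset.sum_congr rfl fun y' _ =>
              sum_norm (hgX1 w') (fun rx => by ring)
      _ = ∑ x', ∑ w', fX x' * fW x' w' * fZ w' z * gZ true :=
          Finset.sum_congr rfl fun x' _ => Finset.sum_congr rfl fun w' _ =>
            sum_norm (hfY1 x' z) (fun y' => by ring)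
      _ = gZ true * ∑ x', ∑ w', fX x' * fW x' w' * fZ w' z := by
          rw [Finset.mul_sum]
          exact Finset.sum_congr rfl fun x' _ => by
            rw [Finset.mul_sum]
            exact Finset.sum_congr rfl fun w' _ => by ring
  -- A denominator
  have hAd : (∑ x', ∑ w', ∑ z', ∑ y', ∑ rx, ∑ rw, ∑ ry,
        p (x', w', z', y', rx, rw, true, ry)) = gZ true := by
    calc (∑ x', ∑ w', ∑ z', ∑ y', ∑ rx, ∑ rw, ∑ ry,
          p (x', w', z', y', rx, rw, true, ry))
        = ∑ x', ∑ w', ∑ z', ∑ y', ∑ rx, ∑ rw,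
            fX x' * fW x' w' * fZ w' z' * fY x' z' y' * gX w' rx * gZ true
              * gW z' true rw :=
          Finset.sum_congr rfl fun x' _ => Finset.sum_congr rfl fun w' _ =>
            Finset.sum_congr rfl fun z' _ => Finset.sum_congr rfl fun y' _ =>
              Finset.sum_congr rfl fun rx _ => Finset.sum_congr rfl fun rw _ =>
                sum_norm (hgY1 x') (fun ry => by rw [hp]; ring)
      _ = ∑ x', ∑ w', ∑ z', ∑ y', ∑ rx,
            fX x' * fW x' w' * fZ w' z' * fY x' z' y' * gX w' rx * gZ true :=
          Finset.sum_congr rfl fun x' _ => Finset.sum_congr rfl fun w' _ =>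
            Finset.sum_congr rfl fun z' _ => Finset.sum_congr rfl fun y' _ =>
              Finset.sum_congr rfl fun rx _ =>
                sum_norm (hgW1 z' true) (fun rw => by ring)
      _ = ∑ x', ∑ w', ∑ z', ∑ y',
            fX x' * fW x' w' * fZ w' z' * fY x' z' y' * gZ true :=
          Finset.sum_congr rfl fun x' _ => Finset.sum_congr rfl fun w' _ =>
            Finset.sum_congr rfl fun z' _ => Finset.sum_congr rfl fun y' _ =>
              sum_norm (hgX1 w') (fun rx => by ring)
      _ = ∑ x', ∑ w', ∑ z', fX x' * fW x' w' * fZ w' z' * gZ true :=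
          Finset.sum_congr rfl fun x' _ => Finset.sum_congr rfl fun w' _ =>
            Finset.sum_congr rfl fun z' _ =>
              sum_norm (hfY1 x' z') (fun y' => by ring)
      _ = ∑ x', ∑ w', fX x' * fW x' w' * gZ true :=
          Finset.sum_congr rfl fun x' _ => Finset.sum_congr rfl fun w' _ =>
            sum_norm (hfZ1 w') (fun z' => by ring)
      _ = ∑ x', fX x' * gZ true :=
          Finset.sum_congr rfl fun x' _ =>
            sum_norm (hfW1 x') (fun w' => by ring)
      _ = gZ true := sum_norm hfX1 (fun x' => by ring)
  -- B numerator
  have hBn : (∑ x', ∑ y', ∑ rx, ∑ ry, p (x', w, z, y', rx, true, true, ry))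
      = (fZ w z * gZ true * gW z true true) * ∑ x', fX x' * fW x' w := by
    calc (∑ x', ∑ y', ∑ rx, ∑ ry, p (x', w, z, y', rx, true, true, ry))
        = ∑ x', ∑ y', ∑ rx,
            fX x' * fW x' w * fZ w z * fY x' z y' * gX w rx * gZ true
              * gW z true true :=
          Finset.sum_congr rfl fun x' _ => Finset.sum_congr rfl fun y' _ =>
            Finset.sum_congr rfl fun rx _ =>
              sum_norm (hgY1 x') (fun ry => by rw [hp]; ring)
      _ = ∑ x', ∑ y',
            fX x' * fW x' w * fZ w z * fY x' z y' * gZ true * gW z true true :=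
          Finset.sum_congr rfl fun x' _ => Finset.sum_congr rfl fun y' _ =>
            sum_norm (hgX1 w) (fun rx => by ring)
      _ = ∑ x', fX x' * fW x' w * fZ w z * gZ true * gW z true true :=
          Finset.sum_congr rfl fun x' _ =>
            sum_norm (hfY1 x' z) (fun y' => by ring)
      _ = _ := sum_fac (fun x' => by ring)
  -- B denominator
  have hBd : (∑ x', ∑ w', ∑ y', ∑ rx, ∑ ry, p (x', w', z, y', rx, true, true, ry))
      = (gZ true * gW z true true) * ∑ x', ∑ w', fX x' * fW x' w' * fZ w' z := by
    calc (∑ x', ∑ w', ∑ y', ∑ rx, ∑ ry, p (x', w', z, y', rx, true, true, ry))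
        = ∑ x', ∑ w', ∑ y', ∑ rx,
            fX x' * fW x' w' * fZ w' z * fY x' z y' * gX w' rx * gZ true
              * gW z true true :=
          Finset.sum_congr rfl fun x' _ => Finset.sum_congr rfl fun w' _ =>
            Finset.sum_congr rfl fun y' _ => Finset.sum_congr rfl fun rx _ =>
              sum_norm (hgY1 x') (fun ry => by rw [hp]; ring)
      _ = ∑ x', ∑ w', ∑ y',
            fX x' * fW x' w' * fZ w' z * fY x' z y' * gZ true * gW z true true :=
          Finset.sum_congr rfl fun x' _ => Finset.sum_congr rfl fun w' _ =>
            Finset.sum_congr rfl fun y' _ =>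
              sum_norm (hgX1 w') (fun rx => by ring)
      _ = ∑ x', ∑ w', fX x' * fW x' w' * fZ w' z * gZ true * gW z true true :=
          Finset.sum_congr rfl fun x' _ => Finset.sum_congr rfl fun w' _ =>
            sum_norm (hfY1 x' z) (fun y' => by ring)
      _ = (gZ true * gW z true true) * ∑ x', ∑ w', fX x' * fW x' w' * fZ w' z := by
          rw [Finset.mul_sum]
          exact Finset.sum_congr rfl fun x' _ => by
            rw [Finset.mul_sum]
            exact Finset.sum_congr rfl fun w' _ => by ring
  -- C numerator
  have hCn : (∑ y', ∑ ry, p (x, w, z, y', true, true, true, ry))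
      = fX x * fW x w * fZ w z * gX w true * gZ true * gW z true true := by
    calc (∑ y', ∑ ry, p (x, w, z, y', true, true, true, ry))
        = ∑ y', fX x * fW x w * fZ w z * fY x z y' * gX w true * gZ true
            * gW z true true :=
          Finset.sum_congr rfl fun y' _ =>
            sum_norm (hgY1 x) (fun ry => by rw [hp]; ring)
      _ = _ := sum_norm (hfY1 x z) (fun y' => by ring)
  -- C denominator
  have hCd : (∑ x', ∑ y', ∑ ry, p (x', w, z, y', true, true, true, ry))
      = (fZ w z * gX w true * gZ true * gW z true true) * ∑ x', fX x' * fW x' w := by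
    calc (∑ x', ∑ y', ∑ ry, p (x', w, z, y', true, true, true, ry))
        = ∑ x', ∑ y', fX x' * fW x' w * fZ w z * fY x' z y' * gX w true * gZ true
            * gW z true true :=
          Finset.sum_congr rfl fun x' _ => Finset.sum_congr rfl fun y' _ =>
            sum_norm (hgY1 x') (fun ry => by rw [hp]; ring)
      _ = ∑ x', fX x' * fW x' w * fZ w z * gX w true * gZ true * gW z true true :=
          Finset.sum_congr rfl fun x' _ =>
            sum_norm (hfY1 x' z) (fun y' => by ring)
      _ = _ := sum_fac (fun x' => by ring)
  -- D denominator
  have hDd : (∑ y', p (x, w, z, y', true, true, true, true))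
      = fX x * fW x w * fZ w z * gX w true * gY x true * gZ true * gW z true true :=
    sum_norm (hfY1 x z) (fun y' => by rw [hp]; ring)
  rw [hL, hAn, hAd, hBn, hBd, hCn, hCd, hDd, hp]
  field_simp
end
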